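/- arXiv:1109.4095 — 2 statements merged into one kernel-verified Lean document; each statement's English description precedes it below -/
import Mathlib

section
/- If an interpretation I is an answer set of a program P, then I is an answer set of P ∪ I, where I is viewed as a set of facts. -/
/-- A ground literal: an atom together with a polarity
(`true` = positive atom, `false` = strongly negated atom). -/
abbrev Lit (A : Type*) := A × Bool

/-- A ground rule `a₁ ∨ ... ∨ a_l :- b₁,...,b_m, not c₁,...,not c_k`. -/
structure Rule (A : Type*) where
  head : Finset (Lit A)
  pbody : Finset (Lit A)
  nbody : Finset (Lit A)

variable {A : Type*}

/-- An interpretation is consistent: no atom occurs both positively and strongly negated. -/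
def IsInterp (I : Finset (Lit A)) : Prop :=
  ∀ a : A, ¬(((a, true) ∈ I) ∧ ((a, false) ∈ I))

/-- `I` satisfies a rule. -/
def ModelsRule (I : Finset (Lit A)) (r : Rule A) : Prop :=
  r.pbody ⊆ I → (∀ b ∈ r.nbody, b ∉ I) → ∃ a ∈ r.head, a ∈ I

/-- `I` is a model of the (ground) program `P`. -/
def ModelsProg (I : Finset (Lit A)) (P : Set (Rule A)) : Prop :=
  ∀ r ∈ P, ModelsRule I r

/-- The reduct of a ground program `P` relative to `I`: delete rules whose negative
body intersects `I`, and remove the negative body from the remaining rules. -/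
def reduct (P : Set (Rule A)) (I : Finset (Lit A)) : Set (Rule A) :=
  {r' | ∃ r ∈ P, (∀ b ∈ r.nbody, b ∉ I) ∧ r' = ⟨r.head, r.pbody, ∅⟩}

/-- `I` is an answer set of `P`: a minimal (consistent) model of the reduct of `P` w.r.t. `I`. -/
def IsAnswerSet (P : Set (Rule A)) (I : Finset (Lit A)) : Prop :=
  IsInterp I ∧ ModelsProg I (reduct P I) ∧
    ∀ J : Finset (Lit A), J ⊆ I → IsInterp J → ModelsProg J (reduct P I) → J = I

/-- The fact `a.` -/
def factR (a : Lit A) : Rule A := ⟨{a}, ∅, ∅⟩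

/-- An interpretation viewed as a set of facts. -/
def factsOf (I : Finset (Lit A)) : Set (Rule A) := {r | ∃ a ∈ I, r = factR a}

/-- If `I` is an answer set of `P`, then `I` is an answer set of `P ∪ I`,
where `I` is viewed as a set of facts. -/
theorem answer_set_union_facts (P : Set (Rule A)) (I : Finset (Lit A))
    (h : IsAnswerSet P I) : IsAnswerSet (P ∪ factsOf I) I := by
  obtain ⟨hI, hM, hmin⟩ := h
  refine ⟨hI, ?_, ?_⟩
  · rintro r' ⟨r, hr | hr, hnb, rfl⟩
    · exact hM _ ⟨r, hr, hnb, rfl⟩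
    · obtain ⟨a, ha, rfl⟩ := hr
      intro _ _
      exact ⟨a, by simp [factR], ha⟩
  · intro J hJI _ hJ
    apply Finset.Subset.antisymm hJI
    intro a ha
    have := hJ (factR a) ⟨factR a, Or.inr ⟨a, ha, rfl⟩, by simp [factR], by simp [factR]⟩
    simp [ModelsRule, factR] at this
    exact this
end

section
/- Answer sets form an antichain: if I and J are both answer sets of a ground program P and I ⊆ J, then I = J. -/
variable {A : Type*}

/-- Answer sets form an antichain. -/
theorem answer_sets_antichain (P : Set (Rule A)) (I J : Finset (Lit A))
    (hI : IsAnswerSet P I) (hJ : IsAnswerSet P J) (hIJ : I ⊆ J) : I = J := by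
  apply hJ.2.2 I hIJ hI.1
  intro r' hr'
  obtain ⟨r, hrP, hdisj, rfl⟩ := hr'
  exact hI.2.1 _ ⟨r, hrP, fun b hb hbI => hdisj b hb (hIJ hbI), rfl⟩
end
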